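/- arXiv:1808.09596 — 4 statements merged into one kernel-verified Lean document; each statement's English description precedes it below -/
import Mathlib

section
/- Let r, a be coprime positive integers with r ≥ 2 and ℓ = r/gcd(r,a+1). With Dedekind sums δ_{r,a,i} = (1/r) Σ_{ξ^r=1, ξ≠1} ξ^i/((1−ξ)(1−ξ^a)), one has δ_{r,a,(a+1)(ℓ−i)} = δ_{r,a,(a+1)(i+1)} for all integers i. Consequently, the vector (δ_i)_{0 ≤ i ≤ ℓ−1} defined by δ_i = ℓ(δ_{r,a,(a+1)(i+1)} − δ_{r,a,0}) satisfies δ_{ℓ−1−i} = δ_i (palindromicity) and δ_{ℓ−1} = 0. -/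
open Complex in
/-- The Dedekind sum `δ_{r,a,i} = (1/r) Σ_{ξ^r = 1, ξ ≠ 1} ξ^i/((1-ξ)(1-ξ^a))`,
summing over the nontrivial complex `r`-th roots of unity `ξ = exp(2πi j/r)`,
`1 ≤ j ≤ r-1`. -/
noncomputable def dedekindSum (r a : ℕ) (i : ℤ) : ℂ :=
  (r : ℂ)⁻¹ * ∑ j ∈ Finset.Ico 1 r,
    (Complex.exp (2 * Real.pi * Complex.I * j / r)) ^ i /
      ((1 - Complex.exp (2 * Real.pi * Complex.I * j / r)) *
        (1 - (Complex.exp (2 * Real.pi * Complex.I * j / r)) ^ (a : ℕ)))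

/-! The sum is `r`-periodic in `i` because every `ξ` is an `r`-th root of unity, and the
substitution `ξ ↦ ξ⁻¹` gives `δ_{r,a,i} = δ_{r,a,a+1-i}`. Since `r ∣ (a+1)ℓ`, these two
symmetries combine to `δ_{r,a,(a+1)(ℓ-i)} = δ_{r,a,-(a+1)i} = δ_{r,a,(a+1)(i+1)}`. -/

open Complex

theorem Nat.dvd_mul_div_gcd (r b : ℕ) : r ∣ b * (r / r.gcd b) := by
  rw [← Nat.mul_div_assoc b (Nat.gcd_dvd_left r b), mul_comm b r]
  exact Nat.dvd_lcm_left r b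

theorem one_sub_inv_mul_one_sub_inv_pow {K : Type*} [Field K] {z : K} (hz : z ≠ 0) (a : ℕ) :
    (1 - z⁻¹) * (1 - z⁻¹ ^ a) = (z ^ (a + 1))⁻¹ * ((1 - z) * (1 - z ^ a)) := by
  rw [inv_pow]
  field_simp
  ring

theorem inv_zpow_div_eq_zpow_div {K : Type*} [Field K] {z : K} (hz : z ≠ 0) (a : ℕ) (i : ℤ) :
    z⁻¹ ^ ((a : ℤ) + 1 - i) / ((1 - z⁻¹) * (1 - z⁻¹ ^ a)) =
      z ^ i / ((1 - z) * (1 - z ^ a)) := by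
  rw [one_sub_inv_mul_one_sub_inv_pow hz, inv_zpow', div_mul_eq_div_div, div_inv_eq_mul,
    ← zpow_natCast, ← zpow_add₀ hz]
  congr 2
  push_cast
  ring

theorem exp_two_pi_I_mul_div_pow_self {r : ℕ} (hr : r ≠ 0) (j : ℕ) :
    exp (2 * Real.pi * I * j / r) ^ r = 1 := by
  rw [← exp_nat_mul, show (r : ℂ) * (2 * Real.pi * I * j / r) = j * (2 * Real.pi * I) by
    field_simp, exp_nat_mul, exp_two_pi_mul_I, one_pow]

theorem exp_two_pi_I_mul_sub_div_self {r j : ℕ} (hj : j ≤ r) (hr : r ≠ 0) :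
    exp (2 * Real.pi * I * (r - j : ℕ) / r) = (exp (2 * Real.pi * I * j / r))⁻¹ := by
  rw [← exp_neg, Nat.cast_sub hj, show 2 * Real.pi * I * ((r : ℂ) - j) / r =
    2 * Real.pi * I + -(2 * Real.pi * I * j / r) by field_simp; ring, exp_add,
    exp_two_pi_mul_I, one_mul]

theorem dedekindSum_congr_of_modEq (r a : ℕ) {i i' : ℤ} (h : i ≡ i' [ZMOD r]) :
    dedekindSum r a i = dedekindSum r a i' := by
  obtain ⟨k, hk⟩ := Int.modEq_iff_dvd.mp h
  unfold dedekindSum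
  refine congrArg _ (Finset.sum_congr rfl fun j hj => ?_)
  have hr : r ≠ 0 := by have := Finset.mem_Ico.mp hj; omega
  rw [show i' = i + r * k by linarith, zpow_add₀ (exp_ne_zero _), zpow_mul, zpow_natCast,
    exp_two_pi_I_mul_div_pow_self hr, one_zpow, mul_one]

theorem dedekindSum_eq_dedekindSum_add_one_sub (r a : ℕ) (i : ℤ) :
    dedekindSum r a i = dedekindSum r a ((a : ℤ) + 1 - i) := by
  unfold dedekindSum
  congr 1
  conv_rhs => rw [show Finset.Ico 1 r = Finset.Ico (r + 1 - r) (r + 1 - 1) by simp,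
    ← Finset.sum_Ico_reflect _ 1 (Nat.le_succ r)]
  refine Finset.sum_congr rfl fun j hj => ?_
  have hj := Finset.mem_Ico.mp hj
  rw [exp_two_pi_I_mul_sub_div_self hj.2.le (by omega), inv_zpow_div_eq_zpow_div (exp_ne_zero _)]

theorem stmt6_general (r a : ℕ) :
    (∀ i : ℤ, dedekindSum r a ((a + 1) * ((r / Nat.gcd r (a + 1) : ℕ) - i)) =
        dedekindSum r a ((a + 1) * (i + 1))) ∧
    (∀ i : ℤ, 0 ≤ i → i ≤ (r / Nat.gcd r (a + 1) : ℕ) - 1 →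
        ((r / Nat.gcd r (a + 1) : ℕ) : ℂ) *
            (dedekindSum r a ((a + 1) * (((r / Nat.gcd r (a + 1) : ℕ) - 1 - i) + 1)) -
              dedekindSum r a 0) =
          ((r / Nat.gcd r (a + 1) : ℕ) : ℂ) *
            (dedekindSum r a ((a + 1) * (i + 1)) - dedekindSum r a 0)) ∧
    ((r / Nat.gcd r (a + 1) : ℕ) : ℂ) *
        (dedekindSum r a ((a + 1) * (((r / Nat.gcd r (a + 1) : ℕ) - 1) + 1)) -
          dedekindSum r a 0) = 0 := by
  have hℓ : ((a : ℤ) + 1) * (r / Nat.gcd r (a + 1) : ℕ) ≡ 0 [ZMOD r] :=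
    Int.modEq_zero_iff_dvd.mpr (by exact_mod_cast Nat.dvd_mul_div_gcd r (a + 1))
  set ℓ : ℤ := ((r / Nat.gcd r (a + 1) : ℕ) : ℤ)
  have hsymm (i : ℤ) : dedekindSum r a ((a + 1) * (ℓ - i)) =
      dedekindSum r a ((a + 1) * (i + 1)) := by
    rw [dedekindSum_eq_dedekindSum_add_one_sub r a ((a + 1) * (i + 1))]
    refine dedekindSum_congr_of_modEq r a ?_
    simpa [mul_sub, mul_add] using (hℓ.sub_right ((a + 1) * i))
  refine ⟨hsymm, fun i _ _ => ?_, ?_⟩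
  · rw [show ℓ - 1 - i + 1 = ℓ - i by ring, hsymm]
  · rw [sub_add_cancel, dedekindSum_congr_of_modEq r a hℓ, sub_self, mul_zero]

/-- With `ℓ = r / gcd (r, a+1)`, one has
`δ_{r,a,(a+1)(ℓ-i)} = δ_{r,a,(a+1)(i+1)}` for all integers `i`; consequently
the δ-vector `δ_i = ℓ (δ_{r,a,(a+1)(i+1)} - δ_{r,a,0})`, `0 ≤ i ≤ ℓ-1`, is
palindromic (`δ_{ℓ-1-i} = δ_i`) and `δ_{ℓ-1} = 0`. -/
theorem stmt6 (r a : ℕ) (hr : 2 ≤ r) (ha : 0 < a) (hco : Nat.gcd r a = 1) :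
    (∀ i : ℤ, dedekindSum r a ((a + 1) * ((r / Nat.gcd r (a + 1) : ℕ) - i)) =
        dedekindSum r a ((a + 1) * (i + 1))) ∧
    (∀ i : ℤ, 0 ≤ i → i ≤ (r / Nat.gcd r (a + 1) : ℕ) - 1 →
        ((r / Nat.gcd r (a + 1) : ℕ) : ℂ) *
            (dedekindSum r a ((a + 1) * (((r / Nat.gcd r (a + 1) : ℕ) - 1 - i) + 1)) -
              dedekindSum r a 0) =
          ((r / Nat.gcd r (a + 1) : ℕ) : ℂ) *
            (dedekindSum r a ((a + 1) * (i + 1)) - dedekindSum r a 0)) ∧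
    ((r / Nat.gcd r (a + 1) : ℕ) : ℂ) *
        (dedekindSum r a ((a + 1) * (((r / Nat.gcd r (a + 1) : ℕ) - 1) + 1)) -
          dedekindSum r a 0) = 0 :=
  stmt6_general r a
end

section
/- Fix ℓ ≥ 3. For each c ∈ (ℤ/ℓℤ)^× let w(c) be the minimal positive integer with gcd(ℓ, w(c)·c − 1) = 1. Then Σ_{c ∈ (ℤ/ℓℤ)^×} w(c) = ℓ. -/
/-!
Send a slope `c ∈ (ℤ/ℓ)ˣ` to the point `v = -c⁻¹` of the circle `ℤ/ℓ`.
Since `(v + j) c = j c - 1`, `w(c)` is the distance from `v` to the next unit along the circle. The arcs from each unit to the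
next one tile the circle, so their lengths add up to `ℓ`.
-/

open Finset

def IsDistToNext {R : Type*} [AddMonoidWithOne R] (P : Set R) (x : R) (g : ℕ) : Prop :=
  1 ≤ g ∧ x + g ∈ P ∧ ∀ t, 1 ≤ t → t < g → x + t ∉ P

section DistToNext

variable {R : Type*} [AddCommGroupWithOne R] {P : Set R}

lemma IsDistToNext.le_of_add_eq_add {x y : R} {g s t : ℕ} (hy : IsDistToNext P y g)
    (hx : x ∈ P) (hs : 1 ≤ s) (ht : t ≤ g) (h : x + s = y + t) : t ≤ s := by
  by_contra! hst
  refine hy.2.2 (t - s) (by omega) (by omega) ?_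
  rwa [Nat.cast_sub hst.le, ← add_sub_assoc, ← h, add_sub_cancel_right]

lemma IsDistToNext.le_of_sub_mem {x y : R} {g s : ℕ} (hy : IsDistToNext P y g)
    (hs : ∀ t, 1 ≤ t → t < s → x - t ∉ P) (h : y = x - s) : s ≤ g := by
  by_contra! hgs
  have hg := hy.1
  refine hs (s - g) (by omega) (by omega) ?_
  convert hy.2.1 using 1
  rw [Nat.cast_sub hgs.le, h]
  abel

end DistToNext

namespace ZMod

variable {n : ℕ} [NeZero n]

lemma exists_min_sub_mem {P : Set (ZMod n)} (hP : P.Nonempty) (x : ZMod n) :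
    ∃ s : ℕ, 1 ≤ s ∧ x - s ∈ P ∧ ∀ t : ℕ, 1 ≤ t → t < s → x - t ∉ P := by
  classical
  obtain ⟨y, hy⟩ := hP
  have hex : ∃ s : ℕ, 1 ≤ s ∧ x - s ∈ P := by
    refine ⟨(x - y).val + n, by have := NeZero.pos n; omega, ?_⟩
    rwa [Nat.cast_add, natCast_zmod_val, natCast_self, add_zero, sub_sub_cancel]
  exact ⟨Nat.find hex, Nat.find_spec hex |>.1, Nat.find_spec hex |>.2,
    fun t ht hlt hmem => Nat.find_min hex hlt ⟨ht, hmem⟩⟩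

theorem sum_isDistToNext_eq {ι : Type*} [Fintype ι] [Nonempty ι] {f : ι → ZMod n}
    (hf : Function.Injective f) {W : ι → ℕ}
    (hW : ∀ i, IsDistToNext (Set.range f) (f i) (W i)) : ∑ i, W i = n := by
  calc ∑ i, W i = #(univ.sigma fun i => Icc 1 (W i)) := by simp [card_sigma]
    _ = #(univ : Finset (ZMod n)) := by
      refine card_bij (fun p _ => f p.1 + p.2) (fun _ _ => mem_univ _) ?_ ?_
      · rintro ⟨i, s⟩ hs ⟨j, t⟩ ht h
        simp only [mem_sigma, mem_univ, mem_Icc, true_and] at hs ht h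
        have hst : s = t := le_antisymm
          ((hW i).le_of_add_eq_add ⟨j, rfl⟩ ht.1 hs.2 h.symm)
          ((hW j).le_of_add_eq_add ⟨i, rfl⟩ hs.1 ht.2 h)
        subst hst
        obtain rfl : i = j := hf (add_right_cancel h)
        rfl
      · intro x _
        obtain ⟨s, hs, ⟨i, hi⟩, hmin⟩ := exists_min_sub_mem (Set.range_nonempty f) x
        refine ⟨⟨i, s⟩, ?_, by simp [hi]⟩
        simpa using ⟨hs, (hW i).le_of_sub_mem hmin hi⟩
    _ = n := card_univ.trans (ZMod.card n)

lemma sum_filter_coprime_range_eq_sum_units {M : Type*} [AddCommMonoid M] (f : ℕ → M) :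
    ∑ c ∈ (range n).filter (fun c => Nat.gcd n c = 1), f c =
      ∑ u : (ZMod n)ˣ, f (u : ZMod n).val := by
  refine sum_bij' (fun c hc => unitOfCoprime c (Nat.coprime_comm.1 (mem_filter.1 hc).2))
    (fun u _ => (u : ZMod n).val) (fun _ _ => mem_univ _) (fun u _ => ?_) (fun c hc => ?_)
    (fun u _ => Units.ext (natCast_zmod_val _)) (fun c hc => ?_)
  · exact mem_filter.2 ⟨mem_range.2 (val_lt _), Nat.coprime_comm.1 (val_coe_unit_coprime u)⟩
  all_goals simp [val_cast_of_lt (mem_range.1 (mem_filter.1 hc).1)]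

lemma isUnit_add_natCast_iff (u : (ZMod n)ˣ) {j : ℕ} (hj : 1 ≤ j) :
    IsUnit ((u : ZMod n) + j) ↔
      Nat.gcd n (j * ((-u⁻¹ : (ZMod n)ˣ) : ZMod n).val - 1) = 1 := by
  -- For `n = 1` the unit has `val = 0`, so `j * c - 1` truncates to `0`.
  rcases eq_or_ne n 1 with rfl | hn
  · simpa only [Nat.gcd_one_left, iff_true] using isUnit_of_subsingleton _
  have : Nontrivial (ZMod n) := nontrivial_iff.2 hn
  set c := ((-u⁻¹ : (ZMod n)ˣ) : ZMod n).val
  have hc : 1 ≤ c := Nat.one_le_iff_ne_zero.2 ((val_eq_zero _).not.2 (Units.ne_zero _))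
  have key : ((u : ZMod n) + j) * ((-u⁻¹ : (ZMod n)ˣ) : ZMod n) = j * c - 1 := by
    rw [natCast_zmod_val, Units.val_neg, mul_neg, add_mul, Units.mul_inv]; ring
  rw [← Units.isUnit_mul_units _ (-u⁻¹), key, Nat.gcd_comm, ← Nat.Coprime,
    ← isUnit_iff_coprime, Nat.cast_sub (Nat.one_le_iff_ne_zero.2 (by positivity)),
    Nat.cast_mul, Nat.cast_one]

end ZMod

theorem stmt11_general (ℓ : ℕ) (W : ℕ → ℕ)
    (hW : ∀ c, c < ℓ → Nat.gcd ℓ c = 1 →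
      1 ≤ W c ∧ Nat.gcd ℓ (W c * c - 1) = 1 ∧
        ∀ j, 1 ≤ j → j < W c → Nat.gcd ℓ (j * c - 1) ≠ 1) :
    ∑ c ∈ Finset.filter (fun c => Nat.gcd ℓ c = 1) (Finset.range ℓ), W c = ℓ := by
  rcases Nat.eq_zero_or_pos ℓ with rfl | hℓ
  · simp
  have : NeZero ℓ := ⟨hℓ.ne'⟩
  let slope : (ZMod ℓ)ˣ ≃ (ZMod ℓ)ˣ := (Equiv.inv _).trans (Equiv.neg _)
  rw [ZMod.sum_filter_coprime_range_eq_sum_units, ← slope.sum_comp]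
  refine ZMod.sum_isDistToNext_eq Units.val_injective fun u => ?_
  obtain ⟨hpos, hunit, hmin⟩ := hW _ (ZMod.val_lt _)
    (Nat.coprime_comm.1 (ZMod.val_coe_unit_coprime (slope u)))
  exact ⟨hpos, (ZMod.isUnit_add_natCast_iff u hpos).2 hunit,
    fun j hj hjW hmem => hmin j hj hjW ((ZMod.isUnit_add_natCast_iff u hj).1 hmem)⟩

/-- For `ℓ ≥ 3`, the widths `w(c)` of the indecomposable
singularities of local index `ℓ` — `w(c)` minimal positive with
`gcd ℓ (w(c) c - 1) = 1` — summed over all slopes `c ∈ (ℤ/ℓℤ)ˣ` give `ℓ`. -/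
theorem stmt11 (ℓ : ℕ) (hℓ : 3 ≤ ℓ) (W : ℕ → ℕ)
    (hW : ∀ c, c < ℓ → Nat.gcd ℓ c = 1 →
      1 ≤ W c ∧ Nat.gcd ℓ (W c * c - 1) = 1 ∧
        ∀ j, 1 ≤ j → j < W c → Nat.gcd ℓ (j * c - 1) ≠ 1) :
    ∑ c ∈ Finset.filter (fun c => Nat.gcd ℓ c = 1) (Finset.range ℓ), W c = ℓ :=
  stmt11_general ℓ W hW
end

section
/- If X = ℙ(1,a,r) is a weighted projective plane with 1/r(1,a) a residual singularity (gcd(r,a)=1, width gcd(r,a+1) less than local index ℓ₁ = r/gcd(r,a+1)), and ℓ₂ is the local index of 1/a(1,r), then r does not divide (1+a)²; consequently the quantity (1+a)/r + (1+a+r)/(ar) is not congruent to 0 modulo ℤ·(1/ℓ₂). -/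
/-! Put `k = gcd r (a + 1)`, `r = k ℓ₁` and `a + 1 = k c` with `ℓ₁`, `c` coprime. If `r ∣ (1 + a)²`
then `ℓ₁ ∣ k c²`, so `ℓ₁ ∣ k`, which residuality (`k < ℓ₁`) forbids. For the second claim,
`(1 + a)/r + (1 + a + r)/(a r) = ((1 + a)² + r)/(a r)`; as `ℓ₂ ∣ a`, writing this as `m / ℓ₂` gives
`(1 + a)² + r ≡ 0 mod r`, i.e. the divisibility just excluded. -/

theorem Nat.not_dvd_sq_of_gcd_lt_div {n b : ℕ} (h : n.gcd b < n / n.gcd b) : ¬ n ∣ b ^ 2 := by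
  intro hdvd
  have hk : 0 < n.gcd b := Nat.pos_of_ne_zero fun hk => by simp [hk] at h
  obtain ⟨l, c, hlc, hn, hb⟩ := Nat.exists_coprime n b
  generalize n.gcd b = k at *
  subst hn hb
  rw [Nat.mul_div_cancel _ hk] at h
  have hl : l ∣ k * c ^ 2 :=
    Nat.dvd_of_mul_dvd_mul_right hk (by convert hdvd using 1; ring)
  exact absurd (Nat.le_of_dvd hk ((hlc.pow_right 2).dvd_of_dvd_mul_right hl)) (not_le.mpr h)

theorem Nat.dvd_of_add_div_mul_eq_intCast_div {x r a ℓ : ℕ} {m : ℤ} (ha : a ≠ 0) (hr : r ≠ 0)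
    (hℓ : ℓ ∣ a) (h : ((x + r : ℚ) / (a * r)) = m / ℓ) : r ∣ x := by
  obtain ⟨g, rfl⟩ := hℓ
  have hℓ : ℓ ≠ 0 := left_ne_zero_of_mul ha
  have hg : g ≠ 0 := right_ne_zero_of_mul ha
  have hx : (x + r : ℤ) = r * g * m := by
    push_cast at h
    field_simp at h
    exact_mod_cast h
  exact Int.natCast_dvd_natCast.mp ⟨g * m - 1, by linear_combination hx⟩

theorem stmt16_general (r a : ℕ) (ha : 0 < a)
    (hres : Nat.gcd r (a + 1) < r / Nat.gcd r (a + 1)) :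
    ¬ (r ∣ (1 + a) ^ 2) ∧
      ¬ ∃ m : ℤ,
        ((1 + a : ℚ) / r + (1 + a + r : ℚ) / (a * r)) =
          (m : ℚ) / ((a / Nat.gcd a (r + 1) : ℕ) : ℚ) := by
  have hr : r ≠ 0 := by rintro rfl; simp at hres
  have hndvd : ¬ r ∣ (1 + a) ^ 2 := add_comm a 1 ▸ Nat.not_dvd_sq_of_gcd_lt_div hres
  refine ⟨hndvd, fun ⟨m, hm⟩ => hndvd ?_⟩
  refine Nat.dvd_of_add_div_mul_eq_intCast_div (m := m) ha.ne' hr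
    (Nat.div_dvd_of_dvd (Nat.gcd_dvd_left a (r + 1))) ?_
  rw [← hm]
  push_cast
  field_simp
  ring

/-- If `1/r(1,a)` is a residual singularity (coprime `r`, `a`
with width `gcd r (a+1)` less than local index `ℓ₁ = r / gcd r (a+1)`) and
`ℓ₂ = a / gcd a (r+1)` is the local index of `1/a(1,r)`, then `r ∤ (1+a)²`;
consequently `(1+a)/r + (1+a+r)/(ar)` is not congruent to `0` modulo
`ℤ·(1/ℓ₂)`. -/
theorem stmt16 (r a : ℕ) (hr : 2 ≤ r) (ha : 0 < a) (hco : Nat.gcd r a = 1)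
    (hres : Nat.gcd r (a + 1) < r / Nat.gcd r (a + 1)) :
    ¬ (r ∣ (1 + a) ^ 2) ∧
      ¬ ∃ m : ℤ,
        ((1 + a : ℚ) / r + (1 + a + r : ℚ) / (a * r)) =
          (m : ℚ) / ((a / Nat.gcd a (r + 1) : ℕ) : ℚ) :=
  stmt16_general r a ha hres
end

section
/- Suppose λ = N(ℓ+1) for positive integers N and ℓ ≥ 2, and suppose 0 = x₀ < x₁ < ⋯ < x_p = λℓ is a sequence of integers with x_{i+1} − x_i < ℓ for all i (consecutive gaps less than ℓ). Then there exist at least N disjoint index intervals [i,j] with x_j − x_i ≡ 0 (mod ℓ) and x_j − x_i > 0. -/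
/-!
Since every gap is at most `ℓ`, the chain has at least `x_p / ℓ = N (ℓ + 1) ≥ N ℓ` steps, so the
`N` consecutive index windows `[t ℓ, (t + 1) ℓ]`, `t < N`, all lie in `[0, p]`. Each window holds
`ℓ + 1` indices, so by pigeonhole two of them carry values congruent mod `ℓ`; by strict
monotonicity their difference is positive.
-/

theorem Int.exists_dvd_sub_within_Icc (ℓ : ℕ) (hℓ : 0 < ℓ) (x : ℕ → ℤ) (i : ℕ) :
    ∃ u v, i ≤ u ∧ u < v ∧ v ≤ i + ℓ ∧ (ℓ : ℤ) ∣ x v - x u := by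
  have hcard : (Finset.Ico (0 : ℤ) ℓ).card < (Finset.Icc i (i + ℓ)).card := by
    simp only [Int.card_Ico, Nat.card_Icc, sub_zero, Int.toNat_natCast]
    omega
  have hmaps : Set.MapsTo (fun k => x k % ℓ) (Finset.Icc i (i + ℓ)) (Finset.Ico (0 : ℤ) ℓ) :=
    fun k _ => by
      simp only [Finset.coe_Ico, Set.mem_Ico]
      exact ⟨Int.emod_nonneg _ (by omega), Int.emod_lt_of_pos _ (by omega)⟩
  obtain ⟨u, hu, v, hv, hne, hmod⟩ := Finset.exists_ne_map_eq_of_card_lt_of_maps_to hcard hmaps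
  simp only [Finset.mem_Icc] at hu hv
  rcases hne.lt_or_gt with huv | hvu
  · exact ⟨u, v, hu.1, huv, hv.2, Int.ModEq.dvd hmod⟩
  · exact ⟨v, u, hv.1, hvu, hu.2, Int.ModEq.dvd hmod.symm⟩

theorem sub_le_mul_of_forall_succ_sub_le (x : ℕ → ℤ) (c : ℤ) (p : ℕ)
    (hgap : ∀ i, i < p → x (i + 1) - x i ≤ c) : x p - x 0 ≤ p * c := by
  rw [← Finset.sum_range_sub]
  simpa using Finset.sum_le_card_nsmul _ _ _ fun i hi => hgap i (Finset.mem_range.mp hi)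

theorem stmt18_general (N ℓ p : ℕ) (hℓ : 2 ≤ ℓ) (x : ℕ → ℤ)
    (h0 : x 0 = 0) (hp : x p = (N * (ℓ + 1) * ℓ : ℕ))
    (hmono : ∀ i, i < p → x i < x (i + 1))
    (hgap : ∀ i, i < p → x (i + 1) - x i < ℓ) :
    ∃ a b : ℕ → ℕ,
      (∀ t, t < N → a t < b t ∧ b t ≤ p ∧
        (ℓ : ℤ) ∣ (x (b t) - x (a t)) ∧ 0 < x (b t) - x (a t)) ∧
      (∀ t, t + 1 < N → b t ≤ a (t + 1)) := by
  have hlen : N * ℓ ≤ p := by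
    have hsum := sub_le_mul_of_forall_succ_sub_le x ℓ p fun i hi => (hgap i hi).le
    rw [hp, h0, sub_zero] at hsum
    have : N * (ℓ + 1) * ℓ ≤ p * ℓ := by exact_mod_cast hsum
    nlinarith [Nat.le_of_mul_le_mul_right this (by omega)]
  have hstrict : StrictMonoOn x (Set.Iic p) := strictMonoOn_Iic_of_lt_succ hmono
  choose a b hab using fun t => Int.exists_dvd_sub_within_Icc ℓ (by omega) x (t * ℓ)
  refine ⟨a, b, fun t ht => ?_, fun t _ => ?_⟩
  · obtain ⟨-, hlt, hle, hdvd⟩ := hab t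
    have hbp : b t ≤ p := by nlinarith
    exact ⟨hlt, hbp, hdvd, sub_pos.mpr (hstrict (Set.mem_Iic.mpr (by omega)) hbp hlt)⟩
  · have hb := (hab t).2.2.1
    have ha := (hab (t + 1)).1
    rw [add_mul, one_mul] at ha
    omega

/-- If `λ = N(ℓ+1)` and `0 = x₀ < x₁ < ⋯ < x_p = λℓ` is a
sequence of integers with consecutive gaps less than `ℓ`, then there exist at
least `N` disjoint index intervals `[aₜ, bₜ]` with
`x_{bₜ} - x_{aₜ} ≡ 0 (mod ℓ)` and `x_{bₜ} - x_{aₜ} > 0`. -/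
theorem stmt18 (N ℓ p : ℕ) (hN : 0 < N) (hℓ : 2 ≤ ℓ) (x : ℕ → ℤ)
    (h0 : x 0 = 0) (hp : x p = (N * (ℓ + 1) * ℓ : ℕ))
    (hmono : ∀ i, i < p → x i < x (i + 1))
    (hgap : ∀ i, i < p → x (i + 1) - x i < ℓ) :
    ∃ a b : ℕ → ℕ,
      (∀ t, t < N → a t < b t ∧ b t ≤ p ∧
        (ℓ : ℤ) ∣ (x (b t) - x (a t)) ∧ 0 < x (b t) - x (a t)) ∧
      (∀ t, t + 1 < N → b t ≤ a (t + 1)) :=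
  stmt18_general N ℓ p hℓ x h0 hp hmono hgap
end
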